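/- The Knuth–Bendix normal form in the Vershik group V_n is unique: if x_{i_1}^{μ_1} ⋯ x_{i_k}^{μ_k} = x_{i'_1}^{μ'_1} ⋯ x_{i'_{k'}}^{μ'_{k'}} holds in V_n, where both expressions have all exponents nonzero, both have total exponent sum Σ|μ_j| (respectively Σ|μ'_j|) equal to the length of the common element, and both index sequences satisfy conditions (i)–(iii), then k = k' and (i_j, μ_j) = (i'_j, μ'_j) for all j = 1, …, k. -/

import Mathlib

/-- Defining relations of the Vershik group `V n`: generators `x_i` and `x_j`
(0-indexed by `Fin n`) commute whenever `|i - j| ≥ 2`. -/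
def VershikRels (n : ℕ) : Set (FreeGroup (Fin n)) :=
  {r | ∃ i j : Fin n, 2 ≤ |(i : ℤ) - (j : ℤ)| ∧
      r = FreeGroup.of i * FreeGroup.of j * (FreeGroup.of i)⁻¹ * (FreeGroup.of j)⁻¹}

/-- The Vershik group of rank `n`. -/
abbrev Vershik (n : ℕ) : Type := PresentedGroup (VershikRels n)

/-- The generator `x_{i+1}` of the Vershik group (0-indexed by `Fin n`). -/
def xGen (n : ℕ) (i : Fin n) : Vershik n := PresentedGroup.of i

/-- A letter: a generator or the inverse of a generator. -/
def IsLetter (n : ℕ) (g : Vershik n) : Prop :=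
  ∃ i : Fin n, g = xGen n i ∨ g = (xGen n i)⁻¹

/-- The length `l(u)`: the minimal number of letters (generators or inverses of
generators) needed to write `u` as a product. -/
noncomputable def vLength {n : ℕ} (u : Vershik n) : ℕ :=
  sInf {k | ∃ L : List (Vershik n), L.length = k ∧ (∀ g ∈ L, IsLetter n g) ∧ L.prod = u}

/-- Conditions (i)–(iii) on the (1-indexed) index sequence of an expression
`x_{i_1}^{μ_1} ⋯ x_{i_k}^{μ_k}`, recorded as a list of pairs (index, exponent):
for consecutive 1-based generator indices `a = i_j` and `b = i_{j+1}`: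
(i) if `a = 1` then `b > 1`; (ii) if `1 < a < n` then `b = a - 1` or `b > a`;
(iii) if `a = n` then `b = n - 1`. -/
def KBIndexConds (n : ℕ) (L : List (Fin n × ℤ)) : Prop :=
  ∀ j : ℕ, ∀ hj : j + 1 < L.length,
    (((L[j]'(Nat.lt_of_succ_lt hj)).1 : ℕ) + 1 = 1 → 1 < ((L[j+1]'hj).1 : ℕ) + 1) ∧
    (1 < ((L[j]'(Nat.lt_of_succ_lt hj)).1 : ℕ) + 1 →
      ((L[j]'(Nat.lt_of_succ_lt hj)).1 : ℕ) + 1 < n →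
      (((L[j+1]'hj).1 : ℕ) + 1 = ((L[j]'(Nat.lt_of_succ_lt hj)).1 : ℕ) + 1 - 1 ∨
        ((L[j]'(Nat.lt_of_succ_lt hj)).1 : ℕ) + 1 < ((L[j+1]'hj).1 : ℕ) + 1)) ∧
    (((L[j]'(Nat.lt_of_succ_lt hj)).1 : ℕ) + 1 = n → ((L[j+1]'hj).1 : ℕ) + 1 = n - 1)

/-- `L` (a list of pairs `(i_j, μ_j)` of a generator index and a nonzero exponent)
is a Knuth–Bendix normal form of `u ∈ V_n`: `u = x_{i_1}^{μ_1} ⋯ x_{i_k}^{μ_k}`,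
all `μ_j ≠ 0`, `Σ |μ_j| = l(u)`, and the index sequence satisfies (i)–(iii). -/
def IsKBNormalForm (n : ℕ) (u : Vershik n) (L : List (Fin n × ℤ)) : Prop :=
  (∀ p ∈ L, p.2 ≠ 0) ∧
  (L.map fun p => xGen n p.1 ^ p.2).prod = u ∧
  (L.map fun p => p.2.natAbs).sum = vLength u ∧
  KBIndexConds n L

/-!
Write `x_i^{±1}` as the letter `(i, ±) : Fin n × Bool`, and call two words trace equivalent if one
arises from the other by swapping adjacent letters whose indices differ by at least two. A word is
reduced if no trace-equivalent word contains a cancelling pair `x x⁻¹`; words of length `l(u)` are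
reduced. The group `V_n` acts on trace classes of reduced words: a letter `a` deletes `a⁻¹` if
`a⁻¹` can be moved to the front, and is prepended otherwise. Applying this action to the empty
word shows that reduced words representing the same element are trace equivalent.

Conditions (i)–(iii) imply that along the expanded word `x_{i_1}^{±1} ⋯ x_{i_1}^{±1} x_{i_2}^{±1} ⋯`
the index never drops by more than one. In such a word a letter that can be moved to the front
has index at least that of the first letter, so two trace-equivalent words of this kind have the
same first letter and, by cancellation, coincide.
-/

lemma List.eq_of_map_eq_of_injOn {α β : Type*} {f : α → β} {s : Set α} (hf : s.InjOn f) :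
    ∀ {l l' : List α}, (∀ x ∈ l, x ∈ s) → (∀ x ∈ l', x ∈ s) → l.map f = l'.map f → l = l'
  | [], [], _, _, _ => rfl
  | x :: l, x' :: l', hl, hl', h => by
    simp only [List.forall_mem_cons, List.map_cons, List.cons.injEq] at hl hl' h
    rw [hf hl.1 hl'.1 h.1, eq_of_map_eq_of_injOn hf hl.2 hl'.2 h.2]

namespace PartialComm

variable {ι : Type*} {G : SimpleGraph ι}

def letterInv (a : ι × Bool) : ι × Bool := (a.1, !a.2)

@[simp] lemma letterInv_fst (a : ι × Bool) : (letterInv a).1 = a.1 := rfl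

@[simp] lemma letterInv_letterInv (a : ι × Bool) : letterInv (letterInv a) = a := by
  simp [letterInv]

variable (G) in
def Swap (W W' : List (ι × Bool)) : Prop :=
  ∃ P Q a b, G.Adj a.1 b.1 ∧ W = P ++ a :: b :: Q ∧ W' = P ++ b :: a :: Q

variable (G) in
def TraceEquiv : List (ι × Bool) → List (ι × Bool) → Prop := Relation.EqvGen (Swap G)

variable (G) in
def Reduced (W : List (ι × Bool)) : Prop :=
  ∀ U, TraceEquiv G W U → ¬ ∃ P c Q, U = P ++ c :: letterInv c :: Q

namespace TraceEquiv

variable {W W' W'' : List (ι × Bool)}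

@[refl] lemma refl (W : List (ι × Bool)) : TraceEquiv G W W := Relation.EqvGen.refl W

lemma symm (h : TraceEquiv G W W') : TraceEquiv G W' W := Relation.EqvGen.symm _ _ h

lemma trans (h : TraceEquiv G W W') (h' : TraceEquiv G W' W'') : TraceEquiv G W W'' :=
  Relation.EqvGen.trans _ _ _ h h'

lemma swap (P Q : List (ι × Bool)) {a b : ι × Bool} (h : G.Adj a.1 b.1) :
    TraceEquiv G (P ++ a :: b :: Q) (P ++ b :: a :: Q) :=
  .rel _ _ ⟨P, Q, a, b, h, rfl, rfl⟩

lemma eq_of_swap_invariant {β : Type*} {f : List (ι × Bool) → β}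
    (hf : ∀ W W', Swap G W W' → f W = f W') (h : TraceEquiv G W W') : f W = f W' :=
  congrArg (Quot.lift f hf) (Quot.eqvGen_sound h)

lemma map_of_swap {f : List (ι × Bool) → List (ι × Bool)}
    (hf : ∀ W W', Swap G W W' → TraceEquiv G (f W) (f W')) (h : TraceEquiv G W W') :
    TraceEquiv G (f W) (f W') :=
  Quot.eqvGen_exact <| eq_of_swap_invariant (f := Quot.mk _ ∘ f)
    (fun _ _ hs => Quot.eqvGen_sound (hf _ _ hs)) h

lemma length_eq (h : TraceEquiv G W W') : W.length = W'.length :=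
  eq_of_swap_invariant (by rintro _ _ ⟨P, Q, a, b, -, rfl, rfl⟩; simp) h

lemma append_left (P : List (ι × Bool)) (h : TraceEquiv G W W') :
    TraceEquiv G (P ++ W) (P ++ W') :=
  map_of_swap (by rintro _ _ ⟨R, Q, a, b, hab, rfl, rfl⟩; simpa using swap (P ++ R) Q hab) h

lemma cons (a : ι × Bool) (h : TraceEquiv G W W') : TraceEquiv G (a :: W) (a :: W') :=
  append_left [a] h

lemma bubble {a : ι × Bool} {P : List (ι × Bool)} (hP : ∀ c ∈ P, G.Adj c.1 a.1)
    (Q : List (ι × Bool)) : TraceEquiv G (P ++ a :: Q) (a :: (P ++ Q)) := by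
  induction P with
  | nil => rfl
  | cons c P ih =>
    simp only [List.forall_mem_cons] at hP
    exact (ih hP.2).cons c |>.trans (swap [] _ hP.1)

variable [DecidableEq ι]

lemma filter_eq {i j : ι} (hij : ¬ G.Adj i j) (h : TraceEquiv G W W') :
    W.filter (fun c => c.1 = i ∨ c.1 = j) = W'.filter (fun c => c.1 = i ∨ c.1 = j) := by
  refine eq_of_swap_invariant ?_ h
  rintro _ _ ⟨P, Q, a, b, hab, rfl, rfl⟩
  simp only [List.filter_append, List.filter_cons]
  have : ¬ ((a.1 = i ∨ a.1 = j) ∧ (b.1 = i ∨ b.1 = j)) := by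
    rintro ⟨ha | ha, hb | hb⟩ <;> rw [ha, hb] at hab
    exacts [G.irrefl hab, hij hab, hij hab.symm, G.irrefl hab]
  by_cases ha : a.1 = i ∨ a.1 = j <;> by_cases hb : b.1 = i ∨ b.1 = j <;> simp_all

lemma eraseP (i : ι) (h : TraceEquiv G W W') :
    TraceEquiv G (W.eraseP (·.1 = i)) (W'.eraseP (·.1 = i)) := by
  refine map_of_swap ?_ h
  rintro _ _ ⟨P, Q, a, b, hab, rfl, rfl⟩
  have : ¬ (a.1 = i ∧ b.1 = i) := fun ⟨ha, hb⟩ => G.ne_of_adj hab (ha.trans hb.symm)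
  simp only [List.eraseP_append, List.eraseP_cons]
  split_ifs
  · exact swap _ _ hab
  · by_cases ha : a.1 = i <;> by_cases hb : b.1 = i <;> simp_all [swap, refl]

variable {a b : ι × Bool} {V V' : List (ι × Bool)}

lemma eq_or_adj_of_cons (h : TraceEquiv G (a :: V) (b :: V')) : a = b ∨ G.Adj a.1 b.1 := by
  by_contra! hab
  have := h.filter_eq hab.2
  simp only [List.filter_cons, true_or, or_true, decide_true] at this
  exact hab.1 (List.cons.inj this).1

lemma head_eq_of_fst_eq (h : TraceEquiv G (a :: V) (b :: V')) (hab : a.1 = b.1) : a = b :=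
  h.eq_or_adj_of_cons.resolve_right fun hadj => G.ne_of_adj hadj hab

lemma of_cons (h : TraceEquiv G (a :: V) (a :: V')) : TraceEquiv G V V' := by
  simpa using h.eraseP a.1

lemma tail_of_fst_ne (h : TraceEquiv G (a :: V) (b :: V')) (hab : a.1 ≠ b.1) :
    TraceEquiv G V (b :: V'.eraseP (·.1 = a.1)) := by
  simpa [Ne.symm hab] using h.eraseP a.1

lemma eq_and_adj_of_append_cons {P R W : List (ι × Bool)} {c : ι × Bool}
    (h : TraceEquiv G (P ++ c :: R) (a :: W)) (hP : ∀ e ∈ P, e.1 ≠ a.1) (hc : c.1 = a.1) :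
    c = a ∧ ∀ e ∈ P, G.Adj e.1 a.1 := by
  induction P generalizing W with
  | nil => exact ⟨h.head_eq_of_fst_eq hc, by simp⟩
  | cons e P ih =>
    simp only [List.forall_mem_cons] at hP ⊢
    have hea : G.Adj e.1 a.1 :=
      h.eq_or_adj_of_cons.resolve_left fun hea => hP.1 (congrArg Prod.fst hea)
    exact (ih (h.tail_of_fst_ne hP.1) hP.2).imp_right (⟨hea, ·⟩)

end TraceEquiv

namespace Reduced

variable {a : ι × Bool} {W W' : List (ι × Bool)}

lemma nil : Reduced G [] := by
  rintro U hU ⟨P, c, Q, rfl⟩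
  simpa using hU.length_eq

lemma of_traceEquiv (hW : Reduced G W) (h : TraceEquiv G W W') : Reduced G W' :=
  fun U hU => hW U (h.trans hU)

lemma of_cons (h : Reduced G (a :: W)) : Reduced G W := by
  rintro U hU ⟨P, c, Q, rfl⟩
  exact h _ (hU.cons a) ⟨a :: P, c, Q, rfl⟩

lemma not_traceEquiv_inv_cons (h : Reduced G (a :: W)) :
    ¬ ∃ V, TraceEquiv G W (letterInv a :: V) := by
  rintro ⟨V, hV⟩
  exact h _ (hV.cons a) ⟨[], a, V, rfl⟩

theorem cons [DecidableEq ι] (hW : Reduced G W)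
    (hnc : ¬ ∃ V, TraceEquiv G W (letterInv a :: V)) : Reduced G (a :: W) := by
  rintro U hU ⟨P, c, Q, rfl⟩
  have hdel : TraceEquiv G W ((P ++ c :: letterInv c :: Q).eraseP (·.1 = a.1)) := by
    simpa using hU.eraseP a.1
  by_cases hP : ∃ e ∈ P, e.1 = a.1
  · obtain ⟨e, he, hea⟩ := hP
    rw [List.eraseP_append_left (by simpa using hea) _ he] at hdel
    exact hW _ hdel ⟨_, c, Q, rfl⟩
  push Not at hP
  rw [List.eraseP_append_right _ (by simpa using hP)] at hdel
  by_cases hc : c.1 = a.1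
  · -- `c` is `a` moved to the front past `P`, so `letterInv c` can be moved to the front of `W`
    obtain ⟨rfl, hPc⟩ := hU.symm.eq_and_adj_of_append_cons hP hc
    simp only [List.eraseP_cons_of_pos, decide_true] at hdel
    exact hnc ⟨P ++ Q, hdel.trans (.bubble (a := letterInv c) hPc Q)⟩
  · simp only [hc, letterInv_fst, decide_false, Bool.false_eq_true, not_false_eq_true,
      List.eraseP_cons_of_neg] at hdel
    exact hW _ hdel ⟨P, c, _, rfl⟩

end Reduced

variable (G) in
def traceSetoid : Setoid {W : List (ι × Bool) // Reduced G W} where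
  r W W' := TraceEquiv G W.1 W'.1
  iseqv := ⟨fun _ => .refl _, .symm, .trans⟩

variable (G) in
def ReducedTrace : Type _ := Quotient (traceSetoid G)

namespace ReducedTrace

variable {a b : ι × Bool} {W V : List (ι × Bool)}

def mk (W : List (ι × Bool)) (h : Reduced G W) : ReducedTrace G := Quotient.mk _ ⟨W, h⟩

lemma mk_eq_mk {hW : Reduced G W} {hV : Reduced G V} : mk W hW = mk V hV ↔ TraceEquiv G W V :=
  Quotient.eq

variable [DecidableEq ι]

open Classical in
noncomputable def act (a : ι × Bool) : ReducedTrace G → ReducedTrace G :=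
  Quotient.lift
    (fun W => if h : ∃ V, TraceEquiv G W.1 (letterInv a :: V) then
      mk h.choose (W.2.of_traceEquiv h.choose_spec).of_cons else mk (a :: W.1) (W.2.cons h))
    (by
      rintro ⟨W, hW⟩ ⟨W', hW'⟩ (h : TraceEquiv G W W')
      have hiff : (∃ V, TraceEquiv G W (letterInv a :: V)) ↔
          ∃ V, TraceEquiv G W' (letterInv a :: V) :=
        exists_congr fun V => ⟨h.symm.trans, h.trans⟩
      by_cases hc : ∃ V, TraceEquiv G W (letterInv a :: V)
      · rw [dif_pos hc, dif_pos (hiff.1 hc), mk_eq_mk]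
        exact (hc.choose_spec.symm.trans (h.trans (hiff.1 hc).choose_spec)).of_cons
      · rw [dif_neg hc, dif_neg (hiff.not.1 hc), mk_eq_mk]
        exact h.cons a)

open Classical in
lemma act_mk (hW : Reduced G W) : act a (mk W hW) =
    if h : ∃ V, TraceEquiv G W (letterInv a :: V) then
      mk h.choose (hW.of_traceEquiv h.choose_spec).of_cons else mk (a :: W) (hW.cons h) :=
  rfl

lemma act_mk_of_cancel {hW : Reduced G W} {hV : Reduced G V}
    (h : TraceEquiv G W (letterInv a :: V)) : act a (mk W hW) = mk V hV := by
  have hc : ∃ V, TraceEquiv G W (letterInv a :: V) := ⟨V, h⟩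
  rw [act_mk, dif_pos hc, mk_eq_mk]
  exact (hc.choose_spec.symm.trans h).of_cons

lemma act_mk_of_not_cancel {hW : Reduced G W} (h : ¬ ∃ V, TraceEquiv G W (letterInv a :: V)) :
    act a (mk W hW) = mk (a :: W) (hW.cons h) := by
  rw [act_mk, dif_neg h]

lemma act_act_letterInv (a : ι × Bool) (t : ReducedTrace G) : act a (act (letterInv a) t) = t := by
  induction t using Quotient.inductionOn with | h W => ?_
  obtain ⟨W, hW⟩ := W
  change act a (act (letterInv a) (mk W hW)) = mk W hW
  by_cases hc : ∃ V, TraceEquiv G W (a :: V)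
  · obtain ⟨V, hV⟩ := hc
    have hV' : Reduced G (a :: V) := hW.of_traceEquiv hV
    rw [act_mk_of_cancel (hV := hV'.of_cons) (by simpa using hV),
      act_mk_of_not_cancel hV'.not_traceEquiv_inv_cons]
    exact mk_eq_mk.2 hV.symm
  · rw [act_mk_of_not_cancel (by simpa using hc)]
    exact act_mk_of_cancel (.refl _)

lemma act_comm_of_cancel_of_not_cancel (hab : G.Adj a.1 b.1) {hW : Reduced G W}
    (hb : ∃ V, TraceEquiv G W (letterInv b :: V)) (ha : ¬ ∃ V, TraceEquiv G W (letterInv a :: V)) :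
    act a (act b (mk W hW)) = act b (act a (mk W hW)) := by
  obtain ⟨V, hV⟩ := hb
  have hV' : Reduced G V := (hW.of_traceEquiv hV).of_cons
  have ha' : ¬ ∃ U, TraceEquiv G V (letterInv a :: U) := by
    rintro ⟨U, hU⟩
    exact ha ⟨_, (hV.trans (hU.cons _)).trans (.swap [] U hab.symm)⟩
  rw [act_mk_of_cancel (hV := hV') hV, act_mk_of_not_cancel ha', act_mk_of_not_cancel ha]
  exact (act_mk_of_cancel ((hV.cons a).trans (.swap [] V hab))).symm

lemma act_comm (hab : G.Adj a.1 b.1) (t : ReducedTrace G) :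
    act a (act b t) = act b (act a t) := by
  induction t using Quotient.inductionOn with | h W => ?_
  obtain ⟨W, hW⟩ := W
  change act a (act b (mk W hW)) = act b (act a (mk W hW))
  by_cases hb : ∃ V, TraceEquiv G W (letterInv b :: V) <;>
    by_cases ha : ∃ V, TraceEquiv G W (letterInv a :: V)
  · obtain ⟨Va, hVa⟩ := ha
    obtain ⟨Vb, hVb⟩ := hb
    obtain ⟨Z, hZ⟩ : ∃ Z, TraceEquiv G Va (letterInv b :: Z) :=
      ⟨_, (hVa.symm.trans hVb).tail_of_fst_ne (G.ne_of_adj hab)⟩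
    have hab' : TraceEquiv G W (letterInv a :: letterInv b :: Z) := hVa.trans (hZ.cons _)
    have hba' := hab'.trans (.swap [] Z hab)
    have hbZ := (hW.of_traceEquiv hab').of_cons
    have haZ := (hW.of_traceEquiv hba').of_cons
    rw [act_mk_of_cancel (hV := haZ) hba', act_mk_of_cancel (hV := hbZ) hab',
      act_mk_of_cancel (hV := hbZ.of_cons) (.refl _), act_mk_of_cancel (.refl _)]
  · exact act_comm_of_cancel_of_not_cancel hab hb ha
  · exact (act_comm_of_cancel_of_not_cancel hab.symm ha hb).symm
  · have hb' : ¬ ∃ U, TraceEquiv G (a :: W) (letterInv b :: U) := fun ⟨_, hU⟩ =>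
      hb ⟨_, hU.tail_of_fst_ne (G.ne_of_adj hab)⟩
    have ha' : ¬ ∃ U, TraceEquiv G (b :: W) (letterInv a :: U) := fun ⟨_, hU⟩ =>
      ha ⟨_, hU.tail_of_fst_ne (G.ne_of_adj hab.symm)⟩
    rw [act_mk_of_not_cancel hb, act_mk_of_not_cancel ha, act_mk_of_not_cancel ha',
      act_mk_of_not_cancel hb', mk_eq_mk]
    exact .swap [] W hab

noncomputable def actPerm (a : ι × Bool) : Equiv.Perm (ReducedTrace G) where
  toFun := act a
  invFun := act (letterInv a)
  left_inv t := by simpa using act_act_letterInv (letterInv a) t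
  right_inv := act_act_letterInv a

lemma actPerm_letterInv (a : ι × Bool) : actPerm (G := G) (letterInv a) = (actPerm a)⁻¹ :=
  Equiv.ext fun _ => rfl

lemma actPerm_commute (hab : G.Adj a.1 b.1) : Commute (actPerm (G := G) a) (actPerm b) :=
  Equiv.ext (act_comm hab)

lemma list_prod_map_actPerm_mk_nil (hW : Reduced G W) :
    (W.map actPerm).prod (mk [] .nil) = mk W hW := by
  induction W with
  | nil => rfl
  | cons a W ih =>
    rw [List.map_cons, List.prod_cons, Equiv.Perm.mul_apply, ih hW.of_cons]
    exact act_mk_of_not_cancel hW.not_traceEquiv_inv_cons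

end ReducedTrace

open ReducedTrace in
theorem traceEquiv_of_prod_map_actPerm_eq [DecidableEq ι] {W W' : List (ι × Bool)}
    (hW : Reduced G W) (hW' : Reduced G W')
    (h : (W.map actPerm).prod = (W'.map (actPerm (G := G))).prod) : TraceEquiv G W W' := by
  rw [← mk_eq_mk (hW := hW) (hV := hW'), ← list_prod_map_actPerm_mk_nil, h,
    list_prod_map_actPerm_mk_nil]

end PartialComm

namespace Vershik

open PartialComm

variable {n : ℕ}

def graph (n : ℕ) : SimpleGraph (Fin n) where
  Adj i j := 2 ≤ |(i : ℤ) - (j : ℤ)|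
  symm := ⟨fun i j h => by rwa [abs_sub_comm]⟩
  loopless := ⟨fun i h => by simp at h⟩

lemma graph_adj_iff {i j : Fin n} : (graph n).Adj i j ↔ (i : ℕ) + 2 ≤ j ∨ (j : ℕ) + 2 ≤ i := by
  change 2 ≤ |(i : ℤ) - j| ↔ _
  rw [le_abs']
  omega

lemma xGen_commute {i j : Fin n} (h : (graph n).Adj i j) : Commute (xGen n i) (xGen n j) := by
  rw [← commutatorElement_eq_one_iff_commute]
  exact PresentedGroup.one_of_mem ⟨i, j, h, rfl⟩

def letterVal (a : Fin n × Bool) : Vershik n := if a.2 then xGen n a.1 else (xGen n a.1)⁻¹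

def wordVal (W : List (Fin n × Bool)) : Vershik n := (W.map letterVal).prod

lemma letterVal_commute {a b : Fin n × Bool} (h : (graph n).Adj a.1 b.1) :
    Commute (letterVal a) (letterVal b) := by
  have := xGen_commute h
  unfold letterVal
  split_ifs
  exacts [this, this.inv_right, this.inv_left, this.inv_inv]

lemma letterVal_mul_letterVal_letterInv (a : Fin n × Bool) :
    letterVal a * letterVal (letterInv a) = 1 := by
  cases a with | mk i s => cases s <;> simp [letterVal, letterInv]

lemma wordVal_append (W W' : List (Fin n × Bool)) :
    wordVal (W ++ W') = wordVal W * wordVal W' := by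
  simp [wordVal]

lemma wordVal_eq_of_traceEquiv {W W' : List (Fin n × Bool)} (h : TraceEquiv (graph n) W W') :
    wordVal W = wordVal W' := by
  refine TraceEquiv.eq_of_swap_invariant ?_ h
  rintro _ _ ⟨P, Q, a, b, hab, rfl, rfl⟩
  simp only [wordVal, List.map_append, List.map_cons, List.prod_append, List.prod_cons,
    ← mul_assoc, (letterVal_commute hab).eq]

lemma vLength_wordVal_le (W : List (Fin n × Bool)) : vLength (wordVal W) ≤ W.length :=
  Nat.sInf_le ⟨W.map letterVal, List.length_map _,
    fun _ hg => by
      obtain ⟨a, -, rfl⟩ := List.mem_map.1 hg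
      exact ⟨a.1, by unfold letterVal; split_ifs <;> simp⟩, rfl⟩

lemma reduced_of_length_eq_vLength {W : List (Fin n × Bool)}
    (h : W.length = vLength (wordVal W)) : Reduced (graph n) W := by
  rintro _ hU ⟨P, c, Q, rfl⟩
  have hval : wordVal W = wordVal (P ++ Q) := by
    rw [wordVal_eq_of_traceEquiv hU, wordVal_append, wordVal_append]
    simp [wordVal, ← mul_assoc, letterVal_mul_letterVal_letterInv]
  have hlen := hU.length_eq
  have hle := vLength_wordVal_le (P ++ Q)
  rw [← hval, ← h] at hle
  simp only [List.length_append, List.length_cons] at hlen hle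
  omega

noncomputable def toPerm : Vershik n →* Equiv.Perm (ReducedTrace (graph n)) :=
  PresentedGroup.toGroup (f := fun i => ReducedTrace.actPerm (i, true)) <| by
    rintro _ ⟨i, j, hij, rfl⟩
    rw [← commutatorElement_def, map_commutatorElement, commutatorElement_eq_one_iff_commute]
    simpa using ReducedTrace.actPerm_commute (G := graph n) (a := (i, true)) (b := (j, true)) hij

lemma toPerm_letterVal (a : Fin n × Bool) : toPerm (letterVal a) = ReducedTrace.actPerm a := by
  obtain ⟨i, _ | _⟩ := a
  · simp [letterVal, toPerm, xGen, ← ReducedTrace.actPerm_letterInv, letterInv]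
  · simp [letterVal, toPerm, xGen]

theorem traceEquiv_of_wordVal_eq {W W' : List (Fin n × Bool)} (hW : Reduced (graph n) W)
    (hW' : Reduced (graph n) W') (h : wordVal W = wordVal W') : TraceEquiv (graph n) W W' := by
  refine traceEquiv_of_prod_map_actPerm_eq hW hW' ?_
  simpa [wordVal, map_list_prod, Function.comp_def, toPerm_letterVal] using congrArg toPerm h

lemma fst_le_of_traceEquiv {a b : Fin n × Bool} {V V' : List (Fin n × Bool)}
    (hV : (a :: V).IsChain fun c d => (c.1 : ℕ) ≤ d.1 + 1)
    (h : TraceEquiv (graph n) (a :: V) (b :: V')) : (a.1 : ℕ) ≤ b.1 := by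
  rcases h.eq_or_adj_of_cons with rfl | hab
  · exact le_rfl
  have htail := h.tail_of_fst_ne ((graph n).ne_of_adj hab)
  obtain _ | ⟨d, V⟩ := V
  · simpa using htail.length_eq
  have hdb := fst_le_of_traceEquiv hV.tail htail
  have had := (List.isChain_cons_cons.1 hV).1
  rw [graph_adj_iff] at hab
  omega

theorem eq_of_traceEquiv_of_isChain {W W' : List (Fin n × Bool)}
    (hW : W.IsChain fun c d => (c.1 : ℕ) ≤ d.1 + 1)
    (hW' : W'.IsChain fun c d => (c.1 : ℕ) ≤ d.1 + 1)
    (h : TraceEquiv (graph n) W W') : W = W' := by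
  induction W generalizing W' with
  | nil => simpa [eq_comm] using h.length_eq
  | cons a V ih =>
    obtain _ | ⟨b, V'⟩ := W'
    · simpa using h.length_eq
    obtain rfl : a = b := h.head_eq_of_fst_eq <| Fin.ext <|
      (fst_le_of_traceEquiv hW h).antisymm (fst_le_of_traceEquiv hW' h.symm)
    exact congrArg _ (ih hW.tail hW'.tail h.of_cons)

def block (p : Fin n × ℤ) : List (Fin n × Bool) :=
  List.replicate p.2.natAbs (p.1, decide (0 < p.2))

def expand (L : List (Fin n × ℤ)) : List (Fin n × Bool) := (L.map block).flatten

lemma block_ne_nil {p : Fin n × ℤ} (hp : p.2 ≠ 0) : block p ≠ [] := by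
  simpa [block] using hp

lemma block_injOn : {p : Fin n × ℤ | p.2 ≠ 0}.InjOn block := by
  rintro ⟨i, μ⟩ hμ ⟨j, ν⟩ hν h
  simp only [Set.mem_ofPred_eq] at hμ hν
  obtain ⟨habs, hμ0 | ⟨rfl, hsign⟩⟩ := by simpa [block, List.replicate_inj] using h
  · exact absurd hμ0 hμ
  · rw [Prod.mk.injEq]
    omega

lemma wordVal_block (p : Fin n × ℤ) : wordVal (block p) = xGen n p.1 ^ p.2 := by
  obtain ⟨i, μ⟩ := p
  simp only [wordVal, block, List.map_replicate, List.prod_replicate, letterVal]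
  rcases le_or_gt μ 0 with h | h
  · simp [not_lt.2 h, ← zpow_natCast, Int.ofNat_natAbs_of_nonpos h]
  · simp [h, ← zpow_natCast, Int.natAbs_of_nonneg h.le]

lemma wordVal_expand (L : List (Fin n × ℤ)) :
    wordVal (expand L) = (L.map fun p => xGen n p.1 ^ p.2).prod := by
  simp only [expand, wordVal, List.map_flatten, List.prod_flatten, List.map_map]
  exact congrArg _ (List.map_congr_left fun p _ => wordVal_block p)

lemma length_expand (L : List (Fin n × ℤ)) :
    (expand L).length = (L.map fun p => p.2.natAbs).sum := by
  simp [expand, block, List.length_flatten, Function.comp_def]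

lemma isChain_expand {L : List (Fin n × ℤ)} (hnz : ∀ p ∈ L, p.2 ≠ 0)
    (hL : L.IsChain fun p q => (p.1 : ℕ) ≤ q.1 + 1) :
    (expand L).IsChain fun c d => (c.1 : ℕ) ≤ d.1 + 1 := by
  rw [expand, List.isChain_flatten fun h => ?_]
  · refine ⟨List.forall_mem_map.2 fun p _ => List.isChain_replicate_of_rel _ (Nat.le_succ _), ?_⟩
    rw [List.isChain_map]
    exact hL.imp fun p q h => by simp [block, List.getLast?_replicate, List.head?_replicate, h]
  · obtain ⟨p, hp, hb⟩ := List.mem_map.1 h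
    exact block_ne_nil (hnz p hp) hb

lemma splitBy_expand {L : List (Fin n × ℤ)} (hnz : ∀ p ∈ L, p.2 ≠ 0)
    (hL : L.IsChain fun p q => p.1 ≠ q.1) :
    (expand L).splitBy (fun c d => c.1 = d.1) = L.map block := by
  refine List.splitBy_flatten (fun h => ?_) ?_ ?_
  · obtain ⟨p, hp, hb⟩ := List.mem_map.1 h
    exact block_ne_nil (hnz p hp) hb
  · exact List.forall_mem_map.2 fun p _ => List.isChain_replicate_of_rel _ (by simp)
  · rw [List.isChain_map]
    exact hL.imp_of_mem_imp fun p q hp hq hpq =>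
      ⟨block_ne_nil (hnz p hp), block_ne_nil (hnz q hq), by simp [block, hpq]⟩

lemma expand_inj {L L' : List (Fin n × ℤ)} (hnz : ∀ p ∈ L, p.2 ≠ 0) (hnz' : ∀ p ∈ L', p.2 ≠ 0)
    (hL : L.IsChain fun p q => p.1 ≠ q.1) (hL' : L'.IsChain fun p q => p.1 ≠ q.1)
    (h : expand L = expand L') : L = L' :=
  List.eq_of_map_eq_of_injOn block_injOn hnz hnz' <| by
    rw [← splitBy_expand hnz hL, h, splitBy_expand hnz' hL']

end Vershik

lemma KBIndexConds.isChain {n : ℕ} {L : List (Fin n × ℤ)} (h : KBIndexConds n L) :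
    L.IsChain fun p q => (q.1 : ℕ) + 1 = p.1 ∨ (p.1 : ℕ) < q.1 :=
  List.isChain_iff_getElem.2 fun j hj => by
    have := (L[j]'(by omega)).1.isLt
    have := h j hj
    omega

namespace IsKBNormalForm

open PartialComm Vershik

variable {n : ℕ} {u : Vershik n} {L : List (Fin n × ℤ)}

lemma wordVal_expand (h : IsKBNormalForm n u L) : wordVal (expand L) = u :=
  (Vershik.wordVal_expand L).trans h.2.1

lemma reduced_expand (h : IsKBNormalForm n u L) : Reduced (graph n) (expand L) :=
  reduced_of_length_eq_vLength <| by rw [length_expand, h.wordVal_expand, h.2.2.1]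

lemma isChain_expand (h : IsKBNormalForm n u L) :
    (expand L).IsChain fun c d => (c.1 : ℕ) ≤ d.1 + 1 :=
  Vershik.isChain_expand h.1 <| h.2.2.2.isChain.imp fun _ _ h => by omega

lemma isChain_fst_ne (h : IsKBNormalForm n u L) : L.IsChain fun p q => p.1 ≠ q.1 :=
  h.2.2.2.isChain.imp fun _ _ h => Fin.ne_of_val_ne (by omega)

end IsKBNormalForm

/-- The Knuth–Bendix normal form in the Vershik group `V_n` is unique: two
normal-form expressions for the same element coincide (same number of factors
and the same pairs `(i_j, μ_j)` throughout). -/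
theorem vershik_kb_normal_form_unique (n : ℕ) (u : Vershik n)
    (L L' : List (Fin n × ℤ))
    (hL : IsKBNormalForm n u L) (hL' : IsKBNormalForm n u L') :
    L = L' := by
  have htrace : PartialComm.TraceEquiv (Vershik.graph n) (Vershik.expand L) (Vershik.expand L') :=
    Vershik.traceEquiv_of_wordVal_eq hL.reduced_expand hL'.reduced_expand
      (hL.wordVal_expand.trans hL'.wordVal_expand.symm)
  exact Vershik.expand_inj hL.1 hL'.1 hL.isChain_fst_ne hL'.isChain_fst_ne <|
    Vershik.eq_of_traceEquiv_of_isChain hL.isChain_expand hL'.isChain_expand htrace
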